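/- arXiv:1801.08307 — 2 statements merged into one kernel-verified Lean document; each statement's English description precedes it below -/
import Mathlib

section
/- For g₄,₅ with −1 ≤ b ≤ a ≤ 1, ab ≠ 0, the manifold (G,P,g) belongs to class W₁, i.e., F(x,y,z) = (1/4){g(x,y)θ(z)+g(x,z)θ(y)−g(x,Py)θ(Pz)−g(x,Pz)θ(Py)} holds for all x,y,z, if and only if a = b = 1. -/
noncomputable section
open Matrix BigOperators

/-- ℝ⁴ -/
abbrev V : Type := Fin 4 → ℝ

/-- standard basis -/
def e (i : Fin 4) : V := Pi.single i 1

/-- standard Euclidean inner product, `g(eᵢ,eⱼ) = δᵢⱼ` -/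
def gdot (x y : V) : ℝ := ∑ i, x i * y i

/-- the cyclic shift `Q e₁ = e₄, Q e₂ = e₁, Q e₃ = e₂, Q e₄ = e₃` -/
def Qv (x : V) : V := fun i => x (i + 1)

/-- `P = Q²` -/
def Pv (x : V) : V := Qv (Qv x)

/-- the bracket of the family g₄,₅ : `[e₁,e₄]=e₁, [e₂,e₄]=a e₂, [e₃,e₄]=b e₃`,
extended bilinearly and antisymmetrically -/
def br45 (a b : ℝ) (x y : V) : V :=
  (x 0 * y 3 - x 3 * y 0) • e 0 + (a * (x 1 * y 3 - x 3 * y 1)) • e 1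
    + (b * (x 2 * y 3 - x 3 * y 2)) • e 2

/-- the bracket of the family g₄,₆ : `[e₁,e₄]=a e₁, [e₂,e₄]=b e₂ − e₃, [e₃,e₄]=e₂ + b e₃` -/
def br46 (a b : ℝ) (x y : V) : V :=
  (a * (x 0 * y 3 - x 3 * y 0)) • e 0
    + (b * (x 1 * y 3 - x 3 * y 1) + (x 2 * y 3 - x 3 * y 2)) • e 1
    + (-(x 1 * y 3 - x 3 * y 1) + b * (x 2 * y 3 - x 3 * y 2)) • e 2

/-- the Levi-Civita connection of left invariant vector fields via the Koszul formula
`2 g(∇ₓy, z) = g([x,y],z) + g([z,x],y) + g([z,y],x)`, using that `{eₖ}` is orthonormal -/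
def koszul (br : V → V → V) (x y : V) : V :=
  fun k => (gdot (br x y) (e k) + gdot (br (e k) x) y + gdot (br (e k) y) x) / 2

/-- the (0,4) curvature tensor `R(x,y,z,u) = g(∇ₓ∇_y z − ∇_y∇ₓ z − ∇_{[x,y]} z, u)` -/
def curv (br : V → V → V) (x y z u : V) : ℝ :=
  gdot (koszul br x (koszul br y z) - koszul br y (koszul br x z) - koszul br (br x y) z) u

/-- `F(x,y,z) = g((∇ₓP)y, z)` -/
def Ften (br : V → V → V) (x y z : V) : ℝ :=
  gdot (koszul br x (Pv y) - Pv (koszul br x y)) z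

/-- the Lee form `θ(x) = gⁱʲ F(eᵢ,eⱼ,x)` -/
def theta (br : V → V → V) (x : V) : ℝ := ∑ i, Ften br (e i) (e i) x


/-! By the Koszul formula the Levi-Civita connection of g₄,₅ is explicit, hence so are `F` and
its Lee form `θ = (1 + 2a + b) e₂♭` (Lean's `e 0` is the paper's `e₁`). The W₁ identity at
`(e₁, e₂, e₁)` and `(e₃, e₄, e₁)` gives `2a + b = 3` and `3b = 1 + 2a`, whose only solution is
`a = b = 1`; for `a = b = 1` the identity is a polynomial identity in the coordinates. -/

lemma e_self (i : Fin 4) : e i i = 1 := Pi.single_eq_same i 1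

lemma e_of_ne {i j : Fin 4} (h : j ≠ i) : e i j = 0 := Pi.single_eq_of_ne h 1

lemma gdot_e_right (x : V) (k : Fin 4) : gdot x (e k) = x k := by
  simp [gdot, e, Pi.single_apply]

lemma gdot_e_left (x : V) (k : Fin 4) : gdot (e k) x = x k := by
  simp [gdot, e, Pi.single_apply]

lemma koszul_apply (br : V → V → V) (x y : V) (k : Fin 4) :
    koszul br x y k = (br x y k + gdot (br (e k) x) y + gdot (br (e k) y) x) / 2 := by
  rw [koszul, gdot_e_right]

lemma Pv_apply (x : V) (i : Fin 4) : Pv x i = x (i + 2) :=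
  congrArg x (add_assoc i 1 1)

lemma koszul_br45 (a b : ℝ) (x y : V) :
    koszul (br45 a b) x y =
      ![x 0 * y 3, a * x 1 * y 3, b * x 2 * y 3, -(x 0 * y 0 + a * x 1 * y 1 + b * x 2 * y 2)] := by
  funext k
  fin_cases k <;>
    simp only [Fin.reduceFinMk, koszul_apply, br45, gdot, Fin.sum_univ_four, Pi.add_apply,
      Pi.smul_apply, smul_eq_mul, e_self, e_of_ne, ne_eq, Fin.reduceEq, not_false_eq_true,
      cons_val] <;> ring

lemma Ften_br45 (a b : ℝ) (x y z : V) :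
    Ften (br45 a b) x y z =
      x 0 * y 1 * z 0 + x 0 * y 0 * z 1 - x 0 * y 3 * z 2 - x 0 * y 2 * z 3
        - b * x 2 * y 3 * z 0 + b * x 2 * y 2 * z 1 + b * x 2 * y 1 * z 2 - b * x 2 * y 0 * z 3
        + 2 * a * x 1 * y 1 * z 1 - 2 * a * x 1 * y 3 * z 3 := by
  simp only [Ften, gdot, Fin.sum_univ_four, Pi.sub_apply, Pv_apply, Fin.reduceAdd, koszul_br45,
    cons_val]
  ring

lemma theta_br45 (a b : ℝ) (z : V) : theta (br45 a b) z = (1 + 2 * a + b) * z 1 := by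
  simp only [theta, Fin.sum_univ_four, Ften_br45, e_self, e_of_ne, ne_eq, Fin.reduceEq,
    not_false_eq_true]
  ring

def IsClassW1 (br : V → V → V) : Prop :=
  ∀ x y z : V, Ften br x y z =
    (1 / 4) * (gdot x y * theta br z + gdot x z * theta br y
      - gdot x (Pv y) * theta br (Pv z) - gdot x (Pv z) * theta br (Pv y))

lemma isClassW1_br45_one : IsClassW1 (br45 1 1) := by
  intro x y z
  simp only [Ften_br45, theta_br45, gdot, Fin.sum_univ_four, Pv_apply, Fin.reduceAdd]
  ring

lemma eq_one_of_isClassW1_br45 {a b : ℝ} (h : IsClassW1 (br45 a b)) : a = 1 ∧ b = 1 := by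
  have h₁ := h (e 0) (e 1) (e 0)
  have h₂ := h (e 2) (e 3) (e 0)
  simp only [Ften_br45, theta_br45, gdot_e_left, Pv_apply, e_self, e_of_ne, ne_eq,
    Fin.reduceEq, not_false_eq_true, Fin.reduceAdd] at h₁ h₂
  constructor <;> linarith

theorem stmt11_general (a b : ℝ) :
    (∀ x y z : V, Ften (br45 a b) x y z =
      (1 / 4) * (gdot x y * theta (br45 a b) z + gdot x z * theta (br45 a b) y
        - gdot x (Pv y) * theta (br45 a b) (Pv z)
        - gdot x (Pv z) * theta (br45 a b) (Pv y))) ↔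
    (a = 1 ∧ b = 1) := by
  refine ⟨eq_one_of_isClassW1_br45, ?_⟩
  rintro ⟨rfl, rfl⟩
  exact isClassW1_br45_one

theorem stmt11 (a b : ℝ) (h1 : -1 ≤ b) (h2 : b ≤ a) (h3 : a ≤ 1) (h4 : a * b ≠ 0) :
    (∀ x y z : V, Ften (br45 a b) x y z =
      (1 / 4) * (gdot x y * theta (br45 a b) z + gdot x z * theta (br45 a b) y
        - gdot x (Pv y) * theta (br45 a b) (Pv z)
        - gdot x (Pv z) * theta (br45 a b) (Pv y))) ↔
    (a = 1 ∧ b = 1) :=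
  stmt11_general a b
end
end

section
/- For g₄,₆ with a ≠ 0 and b ≥ 0, the curvature tensor satisfies R(Qx,Qy,Qz,Qu)=R(x,y,z,u) for all x,y,z,u if and only if a = b, where Q is the cyclic shift Qe₁=e₄, Qe₂=e₁, Qe₃=e₂, Qe₄=e₃. -/
noncomputable section
open Matrix BigOperators

/-! For `a = b`, `ad e₄` acts on `span {e₁, e₂, e₃}` as `-a` times the identity plus a skew
map, so the metric has constant sectional curvature `-a²`: its curvature tensor is built from
`g` alone and is therefore invariant under the isometry `Q`. In general the sectional curvatures
of the planes `e₁e₂` and `e₄e₁ = Q(e₁e₂)` are `-ab` and `-a²`, so invariance forces `a = b`. -/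

lemma koszul_br46 (a b : ℝ) (x y : V) :
    koszul (br46 a b) x y =
      ![a * x 0 * y 3, b * x 1 * y 3 - x 3 * y 2, b * x 2 * y 3 + x 3 * y 1,
        -(a * x 0 * y 0) - b * x 1 * y 1 - b * x 2 * y 2] := by
  funext k
  fin_cases k <;>
    simp [koszul, br46, gdot, e, Fin.sum_univ_four, Pi.single_apply] <;> ring

lemma Qv_e (i : Fin 4) : Qv (e (i + 1)) = e i := by
  funext j
  simp [Qv, e, Pi.single_apply]

lemma gdot_Qv (x y : V) : gdot (Qv x) (Qv y) = gdot x y :=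
  Equiv.sum_comp (Equiv.addRight (1 : Fin 4)) fun i => x i * y i

lemma curv_br46_e0_e1 (a b : ℝ) : curv (br46 a b) (e 0) (e 1) (e 0) (e 1) = a * b := by
  simp [curv, koszul_br46, br46, gdot, e, Fin.sum_univ_four]; ring

lemma curv_br46_e3_e0 (a b : ℝ) : curv (br46 a b) (e 3) (e 0) (e 3) (e 0) = a ^ 2 := by
  simp [curv, koszul_br46, br46, gdot, e, Fin.sum_univ_four]; ring

lemma curv_br46_self (a : ℝ) (x y z u : V) :
    curv (br46 a a) x y z u = a ^ 2 * (gdot x z * gdot y u - gdot y z * gdot x u) := by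
  simp only [curv, gdot, koszul_br46, Nat.succ_eq_add_one, Nat.reduceAdd, Fin.isValue, cons_val,
    cons_val_one, cons_val_zero, sub_cons, head_cons, tail_cons, sub_self, zero_empty, br46, e,
    neg_sub, Pi.add_apply, Pi.smul_apply, Pi.single_eq_same, smul_eq_mul, mul_one, ne_eq,
    zero_ne_one, not_false_eq_true, Pi.single_eq_of_ne, mul_zero, add_zero, Fin.reduceEq,
    one_ne_zero, zero_add, zero_mul, sub_zero, Pi.sub_apply, Fin.sum_univ_four]
  ring

theorem stmt17_general (a b : ℝ) (h1 : a ≠ 0) :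
    (∀ x y z u : V,
      curv (br46 a b) (Qv x) (Qv y) (Qv z) (Qv u) = curv (br46 a b) x y z u) ↔
    a = b := by
  constructor
  · intro h
    have h01 := h (e (3 + 1)) (e (0 + 1)) (e (3 + 1)) (e (0 + 1))
    rw [Qv_e, Qv_e] at h01
    simp only [Fin.reduceAdd, curv_br46_e3_e0, curv_br46_e0_e1] at h01
    exact mul_left_cancel₀ h1 (by rw [← sq, h01])
  · rintro rfl x y z u
    simp only [curv_br46_self, gdot_Qv]

theorem stmt17 (a b : ℝ) (h1 : a ≠ 0) (h2 : 0 ≤ b) :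
    (∀ x y z u : V,
      curv (br46 a b) (Qv x) (Qv y) (Qv z) (Qv u) = curv (br46 a b) x y z u) ↔
    a = b :=
  stmt17_general a b h1
end
end
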